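/- arXiv:1102.5109 — 3 statements merged into one kernel-verified Lean document; each statement's English description precedes it below -/
import Mathlib

section
/- For all natural numbers a and all integers n ≥ 1, the Stern polynomials satisfy B_{2^a·n - 1}(t) = (∑_{j=0}^{a-1} t^j)·B_n(t) + B_{n-1}(t) and B_{2^a·n + 1}(t) = (∑_{j=0}^{a-1} t^j)·B_n(t) + B_{n+1}(t). -/
open Polynomial

/-- The Stern polynomials: `B 0 = 0`, `B 1 = 1`, `B (2n) = t * B n`,
`B (2n+1) = B n + B (n+1)`. -/
noncomputable def stern : ℕ → Polynomial ℤ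
  | 0 => 0
  | 1 => 1
  | n + 2 =>
    if _h : n % 2 = 0 then
      X * stern (n / 2 + 1)
    else
      stern (n / 2 + 1) + stern (n / 2 + 2)
  decreasing_by all_goals omega

/-! Both identities follow by induction on `a`: the number `2^(a+1) n ± 1 = 2 (2^a n) ± 1` is odd,
so `B_{2^(a+1) n ± 1} = B_{2^a n} + B_{2^a n ± 1} = t^a B_n + B_{2^a n ± 1}`, and the new term
`t^a B_n` extends the geometric sum by one. -/

lemma stern_zero : stern 0 = 0 := by
  simp [stern]

lemma stern_two_mul (k : ℕ) : stern (2 * k) = X * stern k := by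
  match k with
  | 0 => simp [stern]
  | k + 1 =>
    rw [show 2 * (k + 1) = 2 * k + 2 by ring, stern, dif_pos (by omega)]
    congr 2
    omega

lemma stern_two_mul_add_one (k : ℕ) : stern (2 * k + 1) = stern k + stern (k + 1) := by
  match k with
  | 0 => simp [stern]
  | k + 1 =>
    rw [show 2 * (k + 1) + 1 = (2 * k + 1) + 2 by ring, stern, dif_neg (by omega)]
    congr 2 <;> omega

lemma stern_pow_two_mul (a n : ℕ) : stern (2 ^ a * n) = X ^ a * stern n := by
  induction a with
  | zero => simp
  | succ a ih =>
    rw [pow_succ', mul_assoc, stern_two_mul, ih, pow_succ', mul_assoc]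

lemma stern_pow_two_mul_add_one (a n : ℕ) :
    stern (2 ^ a * n + 1) = (∑ j ∈ Finset.range a, X ^ j) * stern n + stern (n + 1) := by
  induction a with
  | zero => simp
  | succ a ih =>
    rw [pow_succ', mul_assoc, stern_two_mul_add_one, ih, stern_pow_two_mul,
      Finset.sum_range_succ]
    ring

lemma stern_pow_two_mul_sub_one (a n : ℕ) :
    stern (2 ^ a * n - 1) = (∑ j ∈ Finset.range a, X ^ j) * stern n + stern (n - 1) := by
  rcases Nat.eq_zero_or_pos n with rfl | hn
  · simp [stern_zero]
  induction a with
  | zero => simp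
  | succ a ih =>
    have hpos : 0 < 2 ^ a * n := by positivity
    have hodd : 2 ^ (a + 1) * n - 1 = 2 * (2 ^ a * n - 1) + 1 := by
      rw [pow_succ', mul_assoc]
      omega
    rw [hodd, stern_two_mul_add_one, Nat.sub_add_cancel hpos, ih, stern_pow_two_mul,
      Finset.sum_range_succ]
    ring

theorem stern_pow_two_mul_sub_one_add_one_general (a n : ℕ) :
    stern (2 ^ a * n - 1) =
      (∑ j ∈ Finset.range a, X ^ j) * stern n + stern (n - 1) ∧
    stern (2 ^ a * n + 1) =
      (∑ j ∈ Finset.range a, X ^ j) * stern n + stern (n + 1) :=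
  ⟨stern_pow_two_mul_sub_one a n, stern_pow_two_mul_add_one a n⟩

theorem stern_pow_two_mul_sub_one_add_one (a n : ℕ) (hn : 1 ≤ n) :
    stern (2 ^ a * n - 1) =
      (∑ j ∈ Finset.range a, X ^ j) * stern n + stern (n - 1) ∧
    stern (2 ^ a * n + 1) =
      (∑ j ∈ Finset.range a, X ^ j) * stern n + stern (n + 1) :=
  stern_pow_two_mul_sub_one_add_one_general a n
end

section
/- Let n ≥ 1 be an integer and let μ(n) denote the exponent of the highest power of 2 dividing n (the 2-adic valuation of n). Then t^{μ(n)}·(B_{n+1}(t) + B_{n-1}(t)) = (B_{2^{μ(n)} + 1}(t) + B_{2^{μ(n)} - 1}(t))·B_n(t). In particular, if n is odd then B_{n+1}(t) + B_{n-1}(t) = t·B_n(t). -/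
open Polynomial

lemma stern_even (n : ℕ) : stern (2 * n) = X * stern n := by
  match n with
  | 0 => simp [stern]
  | m + 1 =>
    have h : 2 * (m + 1) = 2 * m + 2 := by ring
    rw [h, stern]
    simp [Nat.mul_mod_right, Nat.mul_div_cancel_left]

lemma stern_odd (n : ℕ) : stern (2 * n + 1) = stern n + stern (n + 1) := by
  match n with
  | 0 => simp [stern]
  | m + 1 =>
    have h : 2 * (m + 1) + 1 = (2 * m + 1) + 2 := by ring
    rw [h, stern]
    have h1 : (2 * m + 1) % 2 = 1 := by omega
    have h2 : (2 * m + 1) / 2 = m := by omega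
    simp [h1, h2]

lemma stern_two_pow (j : ℕ) : stern (2 ^ j) = X ^ j := by
  induction j with
  | zero => simp [stern]
  | succ k ih => rw [pow_succ, mul_comm, stern_even, ih, pow_succ, mul_comm]

lemma stern_pow_succ (j : ℕ) :
    stern (2 ^ (j + 1) + 1) + stern (2 ^ (j + 1) - 1) =
      stern (2 ^ j + 1) + stern (2 ^ j - 1) + 2 * X ^ j := by
  have hp : 1 ≤ 2 ^ j := Nat.one_le_two_pow
  have h1 : 2 ^ (j + 1) + 1 = 2 * 2 ^ j + 1 := by rw [pow_succ]; ring
  have h2 : 2 ^ (j + 1) - 1 = 2 * (2 ^ j - 1) + 1 := by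
    rw [pow_succ]; omega
  rw [h1, h2, stern_odd, stern_odd, stern_two_pow]
  have h3 : 2 ^ j - 1 + 1 = 2 ^ j := by omega
  rw [h3, stern_two_pow]
  ring

lemma key (n : ℕ) (hn : 1 ≤ n) :
    X ^ padicValNat 2 n * (stern (n + 1) + stern (n - 1)) =
      (stern (2 ^ padicValNat 2 n + 1) + stern (2 ^ padicValNat 2 n - 1)) * stern n := by
  induction n using Nat.strong_induction_on with
  | _ n ih =>
    rcases Nat.even_or_odd n with he | ho
    · obtain ⟨m, hm⟩ := he
      have hm' : n = 2 * m := by omega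
      have hm1 : 1 ≤ m := by omega
      have hv : padicValNat 2 n = padicValNat 2 m + 1 := by
        rw [hm', padicValNat.mul (p := 2) two_ne_zero (by omega), padicValNat.self (by norm_num)]
        omega
      have ihm := ih m (by omega) hm1
      have h1 : n + 1 = 2 * m + 1 := by omega
      have h2 : n - 1 = 2 * (m - 1) + 1 := by omega
      have h3 : m - 1 + 1 = m := by omega
      rw [hv, h1, h2, stern_odd, stern_odd, h3, hm', stern_even, stern_pow_succ]
      rw [pow_succ]
      calc X ^ padicValNat 2 m * X * (stern m + stern (m + 1) + (stern (m - 1) + stern m))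
          = X * (X ^ padicValNat 2 m * (stern (m + 1) + stern (m - 1)) +
              2 * X ^ padicValNat 2 m * stern m) := by ring
        _ = X * ((stern (2 ^ padicValNat 2 m + 1) + stern (2 ^ padicValNat 2 m - 1)) * stern m +
              2 * X ^ padicValNat 2 m * stern m) := by rw [ihm]
        _ = _ := by ring
    · obtain ⟨m, hm⟩ := ho
      have hm' : n = 2 * m + 1 := by omega
      subst hm'
      have hv : padicValNat 2 (2 * m + 1) = 0 := by
        rw [padicValNat.eq_zero_iff]
        right; right
        omega
      have h1 : 2 * m + 1 + 1 = 2 * (m + 1) := by omega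
      have h2 : 2 * m + 1 - 1 = 2 * m := by omega
      rw [hv, h1, h2, stern_even, stern_even, stern_odd]
      simp [stern]
      ring

theorem stern_add_eq_mul (n : ℕ) (hn : 1 ≤ n) :
    X ^ padicValNat 2 n * (stern (n + 1) + stern (n - 1)) =
      (stern (2 ^ padicValNat 2 n + 1) + stern (2 ^ padicValNat 2 n - 1)) * stern n ∧
    (Odd n → stern (n + 1) + stern (n - 1) = X * stern n) := by
  refine ⟨key n hn, fun ho => ?_⟩
  obtain ⟨m, hm⟩ := ho
  have hm' : n = 2 * m + 1 := by omega
  subst hm'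
  have h1 : 2 * m + 1 + 1 = 2 * (m + 1) := by omega
  have h2 : 2 * m + 1 - 1 = 2 * m := by omega
  rw [h1, h2, stern_even, stern_even, stern_odd]
  ring
end

section
/- Let ν(m) denote the number of 1's in the binary representation of the natural number m. Then for every natural number n and every nonzero real number t, B_{n+1}(t + 1/t) = ∑_{i=0}^{n} t^{ν(n-i) - ν(i)}, where the exponents ν(n-i) - ν(i) are integers (possibly negative). -/
open Polynomial

/-- `nu m` is the number of ones in the binary expansion of `m`. -/
def nu (m : ℕ) : ℕ := (Nat.digits 2 m).sum

/-!
The sum `S n = ∑_{i ≤ n} t ^ (ν(n - i) - ν(i))` obeys the shifted Stern recursion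
`S 0 = 1`, `S (2m+1) = (t + 1/t) S m`, `S (2m+2) = S m + S (m+1)`, so it equals `B_{n+1}(t + 1/t)`.
Both identities come from splitting the sum by the parity of `i` and using `ν(2a) = ν(a)`,
`ν(2a+1) = ν(a) + 1`: for `n = 2m+1` the terms `i = 2j, 2j+1` carry the exponents `e ± 1`, where `e`
is the exponent of the `j`-th term of `S m`.
-/

open Finset

lemma stern_one : stern 1 = 1 := by
  rw [stern]

lemma stern_two_mul_add_two (m : ℕ) : stern (2 * m + 2) = X * stern (m + 1) := by
  rw [stern]
  simp

lemma stern_two_mul_add_three (m : ℕ) : stern (2 * m + 3) = stern (m + 1) + stern (m + 2) := by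
  rw [show 2 * m + 3 = (2 * m + 1) + 2 by ring, stern]
  simp [show (2 * m + 1) / 2 = m by omega]

theorem aeval_stern_succ_of_recursion {A : Type*} [Ring A] (x : A) (f : ℕ → A) (h_zero : f 0 = 1)
    (h_odd : ∀ m, f (2 * m + 1) = x * f m) (h_even : ∀ m, f (2 * m + 2) = f m + f (m + 1))
    (n : ℕ) : aeval x (stern (n + 1)) = f n := by
  induction n using Nat.strong_induction_on with
  | _ n ih =>
    obtain ⟨m, rfl | rfl⟩ := Nat.even_or_odd' n
    · rcases m with _ | m
      · simp [stern_one, h_zero]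
      · rw [show 2 * (m + 1) + 1 = 2 * m + 3 by ring, show 2 * (m + 1) = 2 * m + 2 by ring,
          stern_two_mul_add_three, map_add, ih m (by omega), ih (m + 1) (by omega), ← h_even]
    · rw [stern_two_mul_add_two, map_mul, aeval_X, ih m (by omega), h_odd]

lemma nu_zero : nu 0 = 0 := rfl

lemma nu_two_mul (m : ℕ) : nu (2 * m) = nu m := by
  rcases Nat.eq_zero_or_pos m with rfl | hm
  · rfl
  · rw [nu, Nat.digits_def' (by norm_num) (by omega)]
    simp [nu]

lemma nu_two_mul_add_one (m : ℕ) : nu (2 * m + 1) = nu m + 1 := by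
  rw [nu, Nat.digits_def' (by norm_num) (by omega), List.sum_cons,
    show (2 * m + 1) % 2 = 1 by omega, show (2 * m + 1) / 2 = m by omega, nu, add_comm]

lemma sum_range_two_mul {M : Type*} [AddCommMonoid M] (f : ℕ → M) (m : ℕ) :
    ∑ i ∈ range (2 * m), f i = ∑ j ∈ range m, (f (2 * j) + f (2 * j + 1)) := by
  induction m with
  | zero => simp
  | succ m ih => rw [mul_add_one, sum_range_succ, sum_range_succ, ih, sum_range_succ, add_assoc]

section NuZPowSum

variable {K : Type*} [Field K]

noncomputable def nuZPowSum (t : K) (n : ℕ) : K :=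
  ∑ i ∈ range (n + 1), t ^ ((nu (n - i) : ℤ) - nu i)

lemma nuZPowSum_zero (t : K) : nuZPowSum t 0 = 1 := by
  simp [nuZPowSum, nu_zero]

lemma nuZPowSum_two_mul_add_one {t : K} (ht : t ≠ 0) (m : ℕ) :
    nuZPowSum t (2 * m + 1) = (t + t⁻¹) * nuZPowSum t m := by
  rw [nuZPowSum, nuZPowSum, show 2 * m + 1 + 1 = 2 * (m + 1) by ring, sum_range_two_mul, mul_sum]
  refine sum_congr rfl fun j hj => ?_
  have hjm : j ≤ m := Nat.lt_succ_iff.mp (mem_range.mp hj)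
  rw [show 2 * m + 1 - 2 * j = 2 * (m - j) + 1 by omega,
    show 2 * m + 1 - (2 * j + 1) = 2 * (m - j) by omega,
    nu_two_mul_add_one, nu_two_mul, nu_two_mul, nu_two_mul_add_one]
  push_cast
  rw [add_sub_right_comm, sub_add_eq_sub_sub, zpow_add_one₀ ht, zpow_sub_one₀ ht]
  ring

lemma nuZPowSum_two_mul_add_two (t : K) (m : ℕ) :
    nuZPowSum t (2 * m + 2) = nuZPowSum t m + nuZPowSum t (m + 1) := by
  rw [nuZPowSum, nuZPowSum, nuZPowSum, show 2 * m + 2 + 1 = 2 * (m + 1) + 1 by ring,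
    sum_range_succ, sum_range_two_mul, sum_add_distrib, add_right_comm, sum_range_succ _ (m + 1),
    add_comm]
  congr 1
  · refine sum_congr rfl fun j hj => ?_
    have hjm : j ≤ m := Nat.lt_succ_iff.mp (mem_range.mp hj)
    rw [show 2 * m + 2 - (2 * j + 1) = 2 * (m - j) + 1 by omega, nu_two_mul_add_one,
      nu_two_mul_add_one]
    push_cast
    rw [add_sub_add_right_eq_sub]
  · congr 1
    · refine sum_congr rfl fun j hj => ?_
      have hjm : j ≤ m := Nat.lt_succ_iff.mp (mem_range.mp hj)
      rw [show 2 * m + 2 - 2 * j = 2 * (m + 1 - j) by omega, nu_two_mul, nu_two_mul]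
    · rw [show 2 * m + 2 - 2 * (m + 1) = 0 by omega, Nat.sub_self, nu_two_mul]

end NuZPowSum

theorem stern_eval_add_inv (n : ℕ) (t : ℝ) (ht : t ≠ 0) :
    Polynomial.aeval (t + 1 / t) (stern (n + 1)) =
      ∑ i ∈ Finset.range (n + 1), t ^ ((nu (n - i) : ℤ) - (nu i : ℤ)) := by
  rw [one_div]
  exact aeval_stern_succ_of_recursion (t + t⁻¹) (nuZPowSum t) (nuZPowSum_zero t)
    (nuZPowSum_two_mul_add_one ht) (nuZPowSum_two_mul_add_two t) n
end
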